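/- Let q > 1 be real and y be real. Then for all integers m and n, one has χ_m(χ_n(y,q), q) = χ_{n+m}(y,q). -/
import Mathlib


/-- `χ_n(y,q) = y(q^{n/2}+q^{-n/2})/2 + √(y²+4/(q-1))·(q^{n/2}-q^{-n/2})/2` for `n : ℤ`. -/
noncomputable def chi (q y : ℝ) (n : ℤ) : ℝ :=
  y * (q ^ ((n : ℝ) / 2) + q ^ (-(n : ℝ) / 2)) / 2
    + Real.sqrt (y ^ 2 + 4 / (q - 1)) * (q ^ ((n : ℝ) / 2) - q ^ (-(n : ℝ) / 2)) / 2

theorem stmt13 (q : ℝ) (hq1 : 1 < q) (y : ℝ) (m n : ℤ) :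
    chi q (chi q y n) m = chi q y (n + m) := by
  have hq0 : (0:ℝ) < q := lt_trans one_pos hq1
  have hq1' : (0:ℝ) < q - 1 := by linarith
  have hk : (0:ℝ) < 4 / (q - 1) := by positivity
  have hnn : (0:ℝ) ≤ y ^ 2 + 4 / (q - 1) := by positivity
  set s := Real.sqrt (y ^ 2 + 4 / (q - 1)) with hs
  have hs0 : 0 ≤ s := Real.sqrt_nonneg _
  have hs2 : s ^ 2 = y ^ 2 + 4 / (q - 1) := Real.sq_sqrt hnn
  set A := q ^ ((n : ℝ) / 2) with hA
  set B := q ^ (-(n : ℝ) / 2) with hB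
  set C := q ^ ((m : ℝ) / 2) with hC
  set D := q ^ (-(m : ℝ) / 2) with hD
  have hApos : 0 < A := Real.rpow_pos_of_pos hq0 _
  have hBpos : 0 < B := Real.rpow_pos_of_pos hq0 _
  have hCpos : 0 < C := Real.rpow_pos_of_pos hq0 _
  have hDpos : 0 < D := Real.rpow_pos_of_pos hq0 _
  have hAB : A * B = 1 := by
    rw [hA, hB, ← Real.rpow_add hq0, show ((n:ℝ)/2 + -(n:ℝ)/2) = 0 by ring, Real.rpow_zero]
  have hCD : C * D = 1 := by
    rw [hC, hD, ← Real.rpow_add hq0, show ((m:ℝ)/2 + -(m:ℝ)/2) = 0 by ring, Real.rpow_zero]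
  have hAC : q ^ (((n : ℤ) + m : ℤ) / 2 : ℝ) = A * C := by
    rw [hA, hC, ← Real.rpow_add hq0]; push_cast; ring_nf
  have hBD : q ^ (-(((n : ℤ) + m : ℤ)) / 2 : ℝ) = B * D := by
    rw [hB, hD, ← Real.rpow_add hq0]; push_cast; ring_nf
  -- the inner value
  have key : (chi q y n) ^ 2 + 4 / (q - 1)
      = (y * (A - B) / 2 + s * (A + B) / 2) ^ 2 := by
    simp only [chi, ← hA, ← hB, ← hs]
    nlinarith [hs2, hAB, sq_nonneg (A - B), sq_nonneg (A + B)]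
  have hspos : 0 < s := Real.sqrt_pos.mpr (by positivity)
  have htu : (y * (A - B) / 2 + s * (A + B) / 2) * (s * (A + B) / 2 - y * (A - B) / 2)
      = y ^ 2 + (4 / (q - 1)) * (A + B) ^ 2 / 4 := by
    linear_combination ((A + B) ^ 2 / 4) * hs2 + y ^ 2 * hAB
  have htupos : 0 < (y * (A - B) / 2 + s * (A + B) / 2) * (s * (A + B) / 2 - y * (A - B) / 2) := by
    rw [htu]; positivity
  have hsum : 0 < (y * (A - B) / 2 + s * (A + B) / 2) + (s * (A + B) / 2 - y * (A - B) / 2) := by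
    have : (y * (A - B) / 2 + s * (A + B) / 2) + (s * (A + B) / 2 - y * (A - B) / 2)
        = s * (A + B) := by ring
    rw [this]; positivity
  have hpos : 0 ≤ y * (A - B) / 2 + s * (A + B) / 2 := by
    by_contra h
    push_neg at h
    have hu : 0 < s * (A + B) / 2 - y * (A - B) / 2 := by linarith
    have := mul_neg_of_neg_of_pos h hu
    linarith
  have hsqrt : Real.sqrt ((chi q y n) ^ 2 + 4 / (q - 1))
      = y * (A - B) / 2 + s * (A + B) / 2 := by
    rw [key, Real.sqrt_sq hpos]
  show chi q y n * (C + D) / 2 + Real.sqrt ((chi q y n) ^ 2 + 4 / (q - 1)) * (C - D) / 2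
      = _
  rw [hsqrt]
  show _ = y * (q ^ (((n : ℤ) + m : ℤ) / 2 : ℝ) + q ^ (-(((n : ℤ) + m : ℤ)) / 2 : ℝ)) / 2
      + s * (q ^ (((n : ℤ) + m : ℤ) / 2 : ℝ) - q ^ (-(((n : ℤ) + m : ℤ)) / 2 : ℝ)) / 2
  rw [hAC, hBD]
  simp only [chi, ← hA, ← hB, ← hs]
  ring
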